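/- arXiv:2502.16029 — 3 statements merged into one kernel-verified Lean document; each statement's English description precedes it below -/
import Mathlib

section
/- For any complex number a with Re(a) > 0 and any self-adjoint operator K on a finite-dimensional Hilbert space (equivalently, Hermitian matrix K), one has exp(a·K²) = √(a/π) · ∫_{-∞}^{∞} exp(-a·p²) · exp(-2a·K·p) dp, where the integral is taken entrywise (Hubbard–Stratonovich transformation). -/
/-! Diagonalising `K = U D U*` with `U` unitary, both exponentials become `U (exp of a diagonal) U*`,
so the identity reduces to one scalar Gaussian integral per eigenvalue `μ`: completing the square,
`∫ exp (-a p² - 2 a μ p) dp = √(π / a) · exp (a μ²)`. -/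

open Complex MeasureTheory Matrix Unitary

namespace Complex

theorem cpow_mul_inv_cpow_of_re_pos {z : ℂ} (hz : 0 < z.re) (w : ℂ) : z ^ w * z⁻¹ ^ w = 1 := by
  have harg : z.arg ≠ Real.pi := fun h => (arg_eq_pi_iff.mp h).1.not_gt hz
  have hz0 : z ≠ 0 := fun h => by simp [h] at hz
  rw [inv_cpow z w harg, mul_inv_cancel₀ (cpow_ne_zero_iff.mpr (.inl hz0))]

end Complex

section Gaussian

variable {a : ℂ}

theorem cexp_neg_mul_sq_mul_cexp_eq_cexp_quadratic (μ : ℂ) (p : ℝ) :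
    cexp (-a * p ^ 2) * cexp (-(2 * a * p) * μ) = cexp (-a * p ^ 2 + -(2 * a * μ) * p + 0) := by
  rw [← Complex.exp_add]
  ring_nf

theorem integrable_cexp_neg_mul_sq_mul_cexp (ha : 0 < a.re) (μ : ℂ) :
    Integrable fun p : ℝ => cexp (-a * p ^ 2) * cexp (-(2 * a * p) * μ) := by
  simpa only [cexp_neg_mul_sq_mul_cexp_eq_cexp_quadratic] using integrable_cexp_quadratic ha (-(2 * a * μ)) 0

theorem integral_cexp_neg_mul_sq_mul_cexp (ha : 0 < a.re) (μ : ℂ) :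
    ∫ p : ℝ, cexp (-a * p ^ 2) * cexp (-(2 * a * p) * μ) =
      (Real.pi / a) ^ (1 / 2 : ℂ) * cexp (a * μ ^ 2) := by
  have ha0 : a ≠ 0 := fun h => by simp [h] at ha
  simp_rw [cexp_neg_mul_sq_mul_cexp_eq_cexp_quadratic,
    integral_cexp_quadratic (b := -a) (by simpa using ha), neg_neg]
  congr 2
  field_simp
  ring

theorem cpow_half_mul_integral_cexp_neg_mul_sq_mul_cexp (ha : 0 < a.re) (μ : ℂ) :
    (a / Real.pi) ^ (1 / 2 : ℂ) * ∫ p : ℝ, cexp (-a * p ^ 2) * cexp (-(2 * a * p) * μ) =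
      cexp (a * μ ^ 2) := by
  have hre : 0 < (a / Real.pi).re := by
    rw [div_ofReal_re]
    exact div_pos ha Real.pi_pos
  have key := cpow_mul_inv_cpow_of_re_pos hre (1 / 2)
  rw [inv_div] at key
  rw [integral_cexp_neg_mul_sq_mul_cexp ha, ← mul_assoc, key, one_mul]

theorem cpow_half_mul_integral_cexp_neg_mul_sq_mul_sum {ι : Type*} [Fintype ι] (ha : 0 < a.re)
    (c μ d : ι → ℂ) :
    (a / Real.pi) ^ (1 / 2 : ℂ) *
        ∫ p : ℝ, cexp (-a * p ^ 2) * ∑ k, c k * cexp (-(2 * a * p) * μ k) * d k =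
      ∑ k, c k * cexp (a * μ k ^ 2) * d k := by
  have h_term (k : ι) (p : ℝ) : cexp (-a * p ^ 2) * (c k * cexp (-(2 * a * p) * μ k) * d k) =
      c k * d k * (cexp (-a * p ^ 2) * cexp (-(2 * a * p) * μ k)) := by
    ring
  simp_rw [Finset.mul_sum, h_term]
  rw [integral_finsetSum _ fun k _ => (integrable_cexp_neg_mul_sq_mul_cexp ha (μ k)).const_mul _,
    Finset.mul_sum]
  refine Finset.sum_congr rfl fun k _ => ?_
  rw [integral_const_mul, ← cpow_half_mul_integral_cexp_neg_mul_sq_mul_cexp ha]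
  ring

end Gaussian

namespace Matrix

variable {n 𝕜 : Type*} [Fintype n] [DecidableEq n] [RCLike 𝕜]

theorem exp_conjStarAlgAut (u : unitary (Matrix n n 𝕜)) (A : Matrix n n 𝕜) :
    NormedSpace.exp (conjStarAlgAut 𝕜 _ u A) = conjStarAlgAut 𝕜 _ u (NormedSpace.exp A) := by
  simpa using exp_units_conj (toUnits u) A

theorem conjStarAlgAut_diagonal_apply (u : unitary (Matrix n n 𝕜)) (d : n → 𝕜) (i j : n) :
    conjStarAlgAut 𝕜 _ u (diagonal d) i j =
      ∑ k, (u : Matrix n n 𝕜) i k * d k * star ((u : Matrix n n 𝕜) j k) := by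
  rw [conjStarAlgAut_apply, mul_apply]
  simp [mul_diagonal]

theorem IsHermitian.exp_smul_pow {K : Matrix n n 𝕜} (hK : K.IsHermitian) (c : 𝕜) (m : ℕ) :
    NormedSpace.exp (c • K ^ m) = conjStarAlgAut 𝕜 _ hK.eigenvectorUnitary
      (diagonal fun k => NormedSpace.exp (c * (hK.eigenvalues k : 𝕜) ^ m)) := by
  conv_lhs => rw [hK.spectral_theorem]
  rw [← map_pow, ← map_smul, exp_conjStarAlgAut, diagonal_pow, ← diagonal_smul, exp_diagonal]
  congr 1
  ext k
  simp [Pi.exp_def]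

theorem IsHermitian.exp_smul_pow_apply {K : Matrix n n 𝕜} (hK : K.IsHermitian) (c : 𝕜) (m : ℕ)
    (i j : n) :
    NormedSpace.exp (c • K ^ m) i j =
      ∑ k, (hK.eigenvectorUnitary : Matrix n n 𝕜) i k *
        NormedSpace.exp (c * (hK.eigenvalues k : 𝕜) ^ m) *
          star ((hK.eigenvectorUnitary : Matrix n n 𝕜) j k) := by
  rw [hK.exp_smul_pow, conjStarAlgAut_diagonal_apply]

end Matrix

/-- **Hubbard–Stratonovich transformation.** For any complex `a` with `Re a > 0` and any
Hermitian matrix `K`, `exp (a • K^2)` equals `√(a/π) · ∫ exp (-a p²) · exp ((-2 a p) • K) dp`,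
the integral of the matrix-valued function taken entrywise. -/
theorem hubbard_stratonovich {n : ℕ} (K : Matrix (Fin n) (Fin n) ℂ)
    (hK : K.IsHermitian) (a : ℂ) (ha : 0 < a.re) :
    ∀ i j, (NormedSpace.exp (a • K ^ 2)) i j =
      (a / (Real.pi : ℂ)) ^ (1 / 2 : ℂ) *
        ∫ p : ℝ, Complex.exp (-a * (p : ℂ) ^ 2) *
          (NormedSpace.exp ((-(2 * a * (p : ℂ))) • K)) i j := by
  intro i j
  have h_pow_one (p : ℝ) : NormedSpace.exp ((-(2 * a * (p : ℂ))) • K) i j =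
      NormedSpace.exp ((-(2 * a * (p : ℂ))) • K ^ 1) i j := by
    rw [pow_one]
  simp_rw [h_pow_one, hK.exp_smul_pow_apply, ← Complex.exp_eq_exp_ℂ, pow_one]
  exact (cpow_half_mul_integral_cexp_neg_mul_sq_mul_sum ha _ _ _).symm
end

section
/- For a Hermitian matrix H', τ ∈ ℝ, and m ∈ ℕ, the m-th Hermite-weighted Gaussian transform of the one-parameter unitary group satisfies: (iᵐ/√(π·2^{m-1}·m!)) ∫_{-∞}^{∞} exp(-2p²) Hₘ(√2·p) exp(-2i·τ·H'·p) dp = (τH')ᵐ/√(m!) · exp(-½ τ² H'²), where Hₘ is the m-th (physicists') Hermite polynomial. -/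
/-- The physicists' Hermite polynomial `Hₘ(x) = (-1)ᵐ e^{x²} (d/dx)ᵐ e^{-x²}`. -/
noncomputable def hermitePhys (m : ℕ) (x : ℝ) : ℝ :=
  (-1 : ℝ) ^ m * Real.exp (x ^ 2) * (deriv^[m] (fun t : ℝ => Real.exp (-t ^ 2))) x

/-!
Since `Hₘ(x) = 2^{m/2} Heₘ(√2 x)` with `Heₘ` the probabilists' Hermite polynomial, the weight
`e^{-2p²} Hₘ(√2 p)` equals `(-1)ᵐ 2^{-m/2}` times the `m`-th derivative of the Gaussian
`G(p) = e^{-2p²}`. The integral is therefore the Fourier transform of `G⁽ᵐ⁾`, which is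
`(2πiw)ᵐ Ĝ(w)` with `Ĝ` again a Gaussian; this proves the identity with a real number `ω` in place
of `τH'`. For a Hermitian `H' = U diag(λ) U*` both sides are `U diag(f(τλₖ)) U*`, since the
exponential, powers and the entrywise integral all commute with conjugation by `U`.
-/

open MeasureTheory Polynomial Real Complex FourierTransform

theorem iteratedDeriv_ofReal_comp {f : ℝ → ℝ} {x : ℝ} {n : ℕ} (hf : ContDiffAt ℝ n f x) :
    iteratedDeriv n (fun y => (f y : ℂ)) x = iteratedDeriv n f x := by
  simp only [iteratedDeriv_eq_iteratedFDeriv]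
  exact congr($(Complex.ofRealCLM.iteratedFDeriv_comp_left hf le_rfl) _)

theorem integrable_aeval_mul_exp_neg_mul_sq {R : Type*} [CommSemiring R] [Algebra R ℝ]
    {b : ℝ} (hb : 0 < b) (P : R[X]) :
    Integrable fun x : ℝ => aeval x P * Real.exp (-b * x ^ 2) := by
  induction P using Polynomial.induction_on' with
  | add p q hp hq => simpa only [map_add, add_mul] using hp.fun_add hq
  | monomial k a =>
    have hk : Integrable fun x : ℝ => x ^ k * Real.exp (-b * x ^ 2) := by
      simpa using integrable_rpow_mul_exp_neg_mul_sq hb (s := k)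
        (by linarith [k.cast_nonneg (α := ℝ)])
    simpa [aeval_monomial, mul_assoc] using hk.const_mul (algebraMap R ℝ a)

theorem hermitePhys_eq_aeval_hermite (m : ℕ) (x : ℝ) :
    hermitePhys m x = √2 ^ m * aeval (√2 * x) (hermite m) := by
  have hscale : (fun t : ℝ => Real.exp (-t ^ 2)) = fun t => Real.exp (-((√2 * t) ^ 2 / 2)) := by
    ext t; rw [mul_pow, Real.sq_sqrt zero_le_two]; ring_nf
  have hsmooth : ContDiff ℝ m fun y : ℝ => Real.exp (-(y ^ 2 / 2)) := by fun_prop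
  rw [hermitePhys, hscale, ← iteratedDeriv_eq_iterate, iteratedDeriv_comp_const_mul hsmooth,
    iteratedDeriv_eq_iterate]
  dsimp only
  rw [deriv_gaussian_eq_hermite_mul_gaussian, mul_pow, Real.sq_sqrt zero_le_two]
  have hexp : Real.exp (x ^ 2) * Real.exp (-(2 * x ^ 2 / 2)) = 1 := by
    rw [← Real.exp_add]; ring_nf; exact Real.exp_zero
  have hsign : ((-1 : ℝ) ^ m) ^ 2 = 1 := by rw [← pow_mul, mul_comm, pow_mul]; simp
  linear_combination (√2 ^ m * aeval (√2 * x) (hermite m)) * (((-1) ^ m) ^ 2 * hexp + hsign)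

theorem iteratedDeriv_cexp_neg_two_mul_sq (k : ℕ) (p : ℝ) :
    iteratedDeriv k (fun p : ℝ => cexp (-2 * p ^ 2)) p =
      ((-2) ^ k * aeval (2 * p) (hermite k) * Real.exp (-2 * p ^ 2) : ℝ) := by
  have hγ : ContDiff ℝ k fun y : ℝ => Real.exp (-(y ^ 2 / 2)) := by fun_prop
  have hG : (fun p : ℝ => cexp (-2 * p ^ 2)) = fun p => (Real.exp (-((2 * p) ^ 2 / 2)) : ℂ) := by
    ext p; push_cast; ring_nf
  rw [hG, iteratedDeriv_ofReal_comp (by fun_prop),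
    iteratedDeriv_comp_const_mul hγ, iteratedDeriv_eq_iterate]
  dsimp only
  rw [deriv_gaussian_eq_hermite_mul_gaussian, neg_pow (2 : ℝ)]
  push_cast
  ring_nf

theorem integrable_iteratedDeriv_cexp_neg_two_mul_sq (k : ℕ) :
    Integrable (iteratedDeriv k fun p : ℝ => cexp (-2 * p ^ 2)) := by
  have hpoly := (integrable_aeval_mul_exp_neg_mul_sq (b := 1 / 2) (by norm_num)
    (hermite k)).comp_mul_left' (two_ne_zero (α := ℝ))
  have hreal : Integrable fun p : ℝ => (-2) ^ k * aeval (2 * p) (hermite k) * rexp (-2 * p ^ 2) :=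
    (hpoly.const_mul ((-2) ^ k)).congr (.of_forall fun p => by ring_nf)
  rw [funext (iteratedDeriv_cexp_neg_two_mul_sq k)]
  exact hreal.ofReal

theorem fourier_cexp_neg_two_mul_sq (w : ℝ) :
    𝓕 (fun p : ℝ => cexp (-2 * p ^ 2)) w = √(π / 2) * cexp (-(π * w) ^ 2 / 2) := by
  have hsqrt : ((π : ℂ) / 2) ^ (1 / 2 : ℂ) = √(π / 2) := by
    rw [Real.sqrt_eq_rpow, ofReal_cpow (by positivity)]
    push_cast; rfl
  rw [Real.fourier_real_eq_integral_exp_smul]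
  convert fourierIntegral_gaussian (b := 2) (by norm_num) (-2 * π * w) using 1
  · congr 1; ext p; rw [smul_eq_mul]; push_cast; ring_nf
  · rw [hsqrt]; ring_nf

theorem cexp_mul_hermitePhys_eq_iteratedDeriv (m : ℕ) (p : ℝ) :
    cexp (-2 * p ^ 2) * hermitePhys m (√2 * p) =
      (-1) ^ m / √2 ^ m * iteratedDeriv m (fun p : ℝ => cexp (-2 * p ^ 2)) p := by
  have h2 : (√2 : ℂ) ^ m * √2 ^ m = 2 ^ m := by
    rw [← mul_pow, ← ofReal_mul, Real.mul_self_sqrt zero_le_two]; push_cast; rfl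
  have hsign : ((-1 : ℂ) ^ m) ^ 2 = 1 := by rw [← pow_mul, mul_comm, pow_mul]; simp
  have hne : (√2 : ℂ) ^ m ≠ 0 := pow_ne_zero _ (ofReal_ne_zero.mpr (by positivity))
  rw [hermitePhys_eq_aeval_hermite, iteratedDeriv_cexp_neg_two_mul_sq, ← mul_assoc,
    Real.mul_self_sqrt zero_le_two]
  push_cast
  rw [neg_pow (2 : ℂ)]
  field_simp
  linear_combination (aeval (2 * p) (hermite m) : ℂ) * (h2 - 2 ^ m * hsign)

theorem sqrt_pi_mul_two_zpow_sub_one (m : ℕ) :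
    √(π * 2 ^ (m - 1 : ℤ)) = √2 ^ m * √(π / 2) := by
  have h : π * 2 ^ (m - 1 : ℤ) = (√2 ^ m) ^ 2 * (π / 2) := by
    rw [← pow_mul, mul_comm m, pow_mul, Real.sq_sqrt zero_le_two,
      zpow_sub₀ two_ne_zero, zpow_natCast, zpow_one]
    ring
  rw [h, Real.sqrt_mul (by positivity), Real.sqrt_sq (by positivity)]

theorem integral_cexp_mul_hermitePhys_mul_cexp (m : ℕ) (ω : ℝ) :
    ∫ p : ℝ, cexp (-2 * p ^ 2) * hermitePhys m (√2 * p) * cexp (-(2 * I * ω * p)) =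
      (-I) ^ m * √(π * 2 ^ (m - 1 : ℤ)) * ω ^ m * cexp (-(ω ^ 2 / 2)) := by
  have hsmooth : ContDiff ℝ (⊤ : ℕ∞) fun p : ℝ => cexp (-2 * p ^ 2) :=
    contDiff_exp.comp (contDiff_const.mul (ofRealCLM.contDiff.pow 2))
  have hfourier := congrFun (Real.fourier_iteratedDeriv (n := m) hsmooth
    (fun k _ => integrable_iteratedDeriv_cexp_neg_two_mul_sq k) le_top) (ω / π)
  have hintegrand (p : ℝ) :
      cexp (-2 * p ^ 2) * hermitePhys m (√2 * p) * cexp (-(2 * I * ω * p)) =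
        (-1) ^ m / √2 ^ m * (cexp (↑(-2 * π * p * (ω / π)) * I) •
          iteratedDeriv m (fun p : ℝ => cexp (-2 * p ^ 2)) p) := by
    have hphase : -2 * π * p * (ω / π) = -2 * ω * p := by field_simp
    rw [cexp_mul_hermitePhys_eq_iteratedDeriv, smul_eq_mul, hphase]
    push_cast
    ring_nf
  have h2 : (√2 : ℂ) ^ m * √2 ^ m = 2 ^ m := by
    rw [← mul_pow, ← ofReal_mul, Real.mul_self_sqrt zero_le_two]; push_cast; rfl
  have hne : (√2 : ℂ) ^ m ≠ 0 := pow_ne_zero _ (ofReal_ne_zero.mpr (by positivity))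
  rw [integral_congr_ae (.of_forall hintegrand), integral_const_mul,
    ← Real.fourier_real_eq_integral_exp_smul, hfourier, fourier_cexp_neg_two_mul_sq,
    sqrt_pi_mul_two_zpow_sub_one, smul_eq_mul]
  have hπ : (π : ℂ) ≠ 0 := ofReal_ne_zero.mpr pi_ne_zero
  push_cast
  field_simp
  rw [sq, h2, neg_pow I]
  ring

theorem integrable_cexp_mul_hermitePhys_mul_cexp (m : ℕ) (ω : ℝ) :
    Integrable fun p : ℝ =>
      cexp (-2 * p ^ 2) * hermitePhys m (√2 * p) * cexp (-(2 * I * ω * p)) := by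
  have hbase : Integrable fun p : ℝ => cexp (-2 * p ^ 2) * hermitePhys m (√2 * p) := by
    simp_rw [cexp_mul_hermitePhys_eq_iteratedDeriv]
    exact (integrable_iteratedDeriv_cexp_neg_two_mul_sq m).const_mul _
  have hphase : Continuous fun p : ℝ => cexp (-(2 * I * ω * p)) := by fun_prop
  refine hbase.mul_bdd (c := 1) hphase.aestronglyMeasurable (.of_forall fun p => ?_)
  rw [show -(2 * I * ω * p) = ((-2 * ω * p : ℝ) : ℂ) * I by push_cast; ring, norm_exp_ofReal_mul_I]

theorem hermite_weighted_gaussian_transform_scalar (m : ℕ) (ω : ℝ) :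
    (I ^ m / (√(π * 2 ^ (m - 1 : ℤ) * m.factorial) : ℂ)) *
        ∫ p : ℝ, cexp (-2 * p ^ 2) * hermitePhys m (√2 * p) * cexp (-(2 * I * ω * p)) =
      (√m.factorial : ℂ)⁻¹ * ω ^ m * cexp (-(ω ^ 2 / 2)) := by
  have hI : I ^ m * (-I) ^ m = 1 := by rw [← mul_pow, mul_neg, I_mul_I, neg_neg, one_pow]
  have hπ : (√(π * 2 ^ (m - 1 : ℤ)) : ℂ) ≠ 0 := ofReal_ne_zero.mpr (by positivity)
  have hfact : (√m.factorial : ℂ) ≠ 0 := ofReal_ne_zero.mpr (by positivity)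
  rw [integral_cexp_mul_hermitePhys_mul_cexp, Real.sqrt_mul (by positivity), ofReal_mul]
  field_simp
  rw [hI, one_mul]

section Conjugation

variable {𝕜 n : Type*} [RCLike 𝕜] [Fintype n] [DecidableEq n]

open Matrix Unitary NormedSpace

theorem Matrix.exp_conjStarAlgAut_s4 (u : unitary (Matrix n n 𝕜)) (A : Matrix n n 𝕜) :
    exp (conjStarAlgAut 𝕜 _ u A) = conjStarAlgAut 𝕜 _ u (exp A) := by
  simpa [conjStarAlgAut_apply] using Matrix.exp_units_conj (Unitary.toUnits u) A

theorem Matrix.conjStarAlgAut_diagonal_apply_s4 (u : unitary (Matrix n n 𝕜)) (d : n → 𝕜) (i j : n) :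
    conjStarAlgAut 𝕜 _ u (diagonal d) i j =
      ∑ k, (u : Matrix n n 𝕜) i k * d k * star ((u : Matrix n n 𝕜) j k) := by
  rw [conjStarAlgAut_apply, mul_apply]
  simp only [mul_diagonal, star_apply]

theorem Matrix.exp_smul_diagonal (c : ℂ) (d : n → ℂ) :
    exp (c • diagonal d) = diagonal fun k => cexp (c * d k) := by
  rw [← diagonal_smul, exp_diagonal]
  congr 1
  ext k
  simp [Complex.exp_eq_exp_ℂ]

theorem integral_mul_conjStarAlgAut_diagonal_apply {α : Type*} [MeasurableSpace α]
    {μ : Measure α} {f : α → 𝕜} {d : α → n → 𝕜} (hd : ∀ k, Integrable (fun p => f p * d p k) μ)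
    (u : unitary (Matrix n n 𝕜)) (i j : n) :
    ∫ p, f p * conjStarAlgAut 𝕜 _ u (diagonal (d p)) i j ∂μ =
      conjStarAlgAut 𝕜 _ u (diagonal fun k => ∫ p, f p * d p k ∂μ) i j := by
  have hterm (p : α) : f p * conjStarAlgAut 𝕜 _ u (diagonal (d p)) i j =
      ∑ k, (u : Matrix n n 𝕜) i k * (f p * d p k) * star ((u : Matrix n n 𝕜) j k) := by
    rw [Matrix.conjStarAlgAut_diagonal_apply_s4, Finset.mul_sum]
    exact Finset.sum_congr rfl fun k _ => by ring
  rw [integral_congr_ae (.of_forall hterm),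
    integral_finsetSum _ fun k _ => ((hd k).const_mul _).mul_const _,
    Matrix.conjStarAlgAut_diagonal_apply_s4]
  exact Finset.sum_congr rfl fun k _ => by rw [integral_mul_const, integral_const_mul]

end Conjugation

/-- **Hermite-weighted Gaussian transform.** For a Hermitian matrix `H'`, `τ ∈ ℝ`, `m ∈ ℕ`:
`(iᵐ/√(π·2^{m-1}·m!)) ∫ exp(-2p²) Hₘ(√2 p) exp(-2iτpH') dp = (τH')ᵐ/√m! · exp(-(τ²/2)H'²)`,
entrywise. -/
theorem hermite_weighted_gaussian_transform {n : ℕ}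
    (H : Matrix (Fin n) (Fin n) ℂ) (hH : H.IsHermitian) (τ : ℝ) (m : ℕ) :
    ∀ i j,
      (Complex.I ^ m / (Real.sqrt (Real.pi * 2 ^ (m - 1 : ℤ) * m.factorial) : ℂ)) *
        ∫ p : ℝ, Complex.exp (-2 * (p : ℂ) ^ 2) * (hermitePhys m (Real.sqrt 2 * p) : ℂ) *
          (NormedSpace.exp ((-(2 * Complex.I * (τ : ℂ) * (p : ℂ))) • H)) i j =
      (((Real.sqrt m.factorial : ℂ))⁻¹ •
        (((τ : ℂ) • H) ^ m * NormedSpace.exp ((-((τ : ℂ) ^ 2 / 2)) • H ^ 2))) i j := by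
  intro i j
  rw [hH.spectral_theorem, RCLike.ofReal_eq_complex_ofReal]
  generalize hH.eigenvectorUnitary = u
  generalize hH.eigenvalues = Λ
  have hphase (p : ℝ) (k : Fin n) :
      cexp (-(2 * I * τ * p) * (ofReal ∘ Λ) k) = cexp (-(2 * I * ↑(τ * Λ k) * p)) := by
    simp only [Function.comp_apply, ofReal_mul]; ring_nf
  simp_rw [← map_smul, ← map_pow, ← map_smul, Matrix.exp_conjStarAlgAut_s4, ← map_mul, ← map_smul,
    Matrix.exp_smul_diagonal, hphase]
  rw [integral_mul_conjStarAlgAut_diagonal_apply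
      fun k => integrable_cexp_mul_hermitePhys_mul_cexp m (τ * Λ k),
    ← smul_eq_mul, ← Matrix.smul_apply, ← map_smul, ← Matrix.diagonal_smul, ← Matrix.diagonal_smul,
    Matrix.diagonal_pow, Matrix.diagonal_pow, Matrix.exp_smul_diagonal,
    Matrix.diagonal_mul_diagonal, ← Matrix.diagonal_smul]
  refine congrArg (fun d => Unitary.conjStarAlgAut ℂ _ u (Matrix.diagonal d) i j)
    (funext fun k => ?_)
  simp only [Pi.smul_apply, Pi.pow_apply, Function.comp_apply, smul_eq_mul]
  rw [hermite_weighted_gaussian_transform_scalar]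
  push_cast
  ring_nf
end

section
/- For a Hermitian matrix H' and real parameters α, and for the family of operators P(m,τ) := (τH')ᵐ/√(m!) · exp(-½ τ² H'²) indexed by m ∈ ℕ, the completeness (Kraus) relation Σ_{m=0}^{∞} P(m,τ)† P(m,τ) = I holds, where the series converges in operator norm. -/
open scoped Matrix Nat
open NormedSpace

/-!
For self-adjoint `a` put `E = exp (-a²/2)`, which is self-adjoint too. Then
`P_m⋆ P_m = E ((a²)ᵐ / m!) E`, so the Kraus sum is `E exp (a²) E`, which is `1` because the three
exponents commute and add up to `0`.
-/

section

variable (𝕂 : Type*) {A : Type*} [RCLike 𝕂] [NormedRing A] [NormedAlgebra 𝕂 A]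

noncomputable def krausOp (a : A) (m : ℕ) : A :=
  ((Real.sqrt m ! : 𝕂))⁻¹ • (a ^ m * exp ((-2⁻¹ : 𝕂) • a ^ 2))

variable {𝕂}

theorem exp_neg_half_smul_mul_exp_mul_exp_neg_half_smul [CompleteSpace A] (x : A) :
    exp ((-2⁻¹ : 𝕂) • x) * exp x * exp ((-2⁻¹ : 𝕂) • x) = 1 := by
  let _ : NormedAlgebra ℚ A := NormedAlgebra.restrictScalars ℚ 𝕂 A
  have hcomm : ∀ c d : 𝕂, Commute (c • x) (d • x) := fun c d =>
    ((Commute.refl x).smul_left c).smul_right d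
  calc exp ((-2⁻¹ : 𝕂) • x) * exp x * exp ((-2⁻¹ : 𝕂) • x)
      = exp ((-2⁻¹ : 𝕂) • x) * exp ((1 : 𝕂) • x) * exp ((-2⁻¹ : 𝕂) • x) := by rw [one_smul]
    _ = exp (((-2⁻¹ : 𝕂) + 1 + -2⁻¹) • x) := by
      rw [← exp_add_of_commute (hcomm _ _), ← add_smul,
        ← exp_add_of_commute (hcomm _ _), ← add_smul]
    _ = 1 := by norm_num

variable [StarRing A] [ContinuousStar A] [StarModule 𝕂 A]

theorem star_krausOp_mul_krausOp {a : A} (ha : IsSelfAdjoint a) (m : ℕ) :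
    star (krausOp 𝕂 a m) * krausOp 𝕂 a m =
      exp ((-2⁻¹ : 𝕂) • a ^ 2) * ((m ! : 𝕂)⁻¹ • (a ^ 2) ^ m) * exp ((-2⁻¹ : 𝕂) • a ^ 2) := by
  have hE : IsSelfAdjoint (exp ((-2⁻¹ : 𝕂) • a ^ 2)) :=
    ((IsSelfAdjoint.ofNat 2).inv₀.neg.smul (ha.pow 2)).exp
  have hc : star ((Real.sqrt m ! : 𝕂))⁻¹ * ((Real.sqrt m ! : 𝕂))⁻¹ = (m ! : 𝕂)⁻¹ := by
    rw [star_inv₀, RCLike.star_def, RCLike.conj_ofReal, ← mul_inv, ← RCLike.ofReal_mul,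
      Real.mul_self_sqrt (Nat.cast_nonneg _), RCLike.ofReal_natCast]
  rw [krausOp, star_smul, star_mul, star_pow, ha.star_eq, hE.star_eq, smul_mul_smul_comm, hc,
    mul_assoc, ← mul_assoc (a ^ m), ← pow_add, ← two_mul, pow_mul, mul_smul_comm,
    smul_mul_assoc, mul_assoc]

theorem hasSum_star_krausOp_mul_krausOp [CompleteSpace A] {a : A} (ha : IsSelfAdjoint a) :
    HasSum (fun m => star (krausOp 𝕂 a m) * krausOp 𝕂 a m) 1 := by
  simp only [star_krausOp_mul_krausOp ha]
  rw [← exp_neg_half_smul_mul_exp_mul_exp_neg_half_smul (𝕂 := 𝕂) (a ^ 2)]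
  exact ((exp_series_hasSum_exp' (a ^ 2)).mul_left _).mul_right _

end

-- The L2 operator norm makes matrices a C⋆-algebra without changing their entrywise topology.
open scoped Matrix.Norms.L2Operator

/-- **Kraus completeness relation.** For a Hermitian matrix `H'` and `τ ∈ ℝ`, the operators
`P(m,τ) = (τH')ᵐ/√(m!) · exp(-(τ²/2) H'²)` satisfy `∑ₘ P(m,τ)† P(m,τ) = I`, the series
converging (in the matrix space, where all norms are equivalent). -/
theorem kraus_completeness {n : ℕ}
    (H : Matrix (Fin n) (Fin n) ℂ) (hH : H.IsHermitian) (τ : ℝ) :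
    HasSum
      (fun m : ℕ =>
        (((Real.sqrt m.factorial : ℂ))⁻¹ •
            (((τ : ℂ) • H) ^ m * NormedSpace.exp ((-((τ : ℂ) ^ 2 / 2)) • H ^ 2)))ᴴ *
        (((Real.sqrt m.factorial : ℂ))⁻¹ •
            (((τ : ℂ) • H) ^ m * NormedSpace.exp ((-((τ : ℂ) ^ 2 / 2)) • H ^ 2))))
      (1 : Matrix (Fin n) (Fin n) ℂ) := by
  have hτH : IsSelfAdjoint ((τ : ℂ) • H) := IsSelfAdjoint.smul (Complex.conj_ofReal τ) hH
  have hexponent : (-((τ : ℂ) ^ 2 / 2)) • H ^ 2 = (-2⁻¹ : ℂ) • ((τ : ℂ) • H) ^ 2 := by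
    rw [smul_pow, smul_smul]
    ring_nf
  have h := hasSum_star_krausOp_mul_krausOp (𝕂 := ℂ) hτH
  simp only [krausOp, ← hexponent, Matrix.star_eq_conjTranspose] at h
  exact h
end
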